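/- arXiv:1106.4703 — 3 statements merged into one kernel-verified Lean document; each statement's English description precedes it below -/
import Mathlib

section
/- Let a < b be real numbers, let f ∈ C²([a,b)) satisfy lim_{τ→b} f(τ) = −∞ and lim_{τ→b} |f'(τ)|² e^{2γ̃ f(τ)} = m, where γ̃ > 0 and m > 0 are constants. Then b is finite. -/
open Filter Set Topology

/-!
Suppose `b = ∞`. The function `g = exp (γtil * f)` tends to `0`, while
`(g')² = γtil² f'² e^{2 γtil f}` tends to `γtil² m > 0`. By the mean value theorem on `[x, x + 1]`,
`g'` takes the value `g (x + 1) - g x` at arbitrarily large points, and this value tends to `0`: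
a contradiction.
-/

theorem EReal.comap_coe_nhdsLT_top : comap Real.toEReal (𝓝[<] ⊤) = atTop := by
  rw [Iio_top, EReal.nhdsWithin_top, comap_map EReal.coe_injective]

theorem exists_tendsto_deriv_comp_zero_of_tendsto_atTop {g : ℝ → ℝ} {l : ℝ}
    (hdiff : ∀ᶠ x in atTop, DifferentiableAt ℝ g x) (hg : Tendsto g atTop (𝓝 l)) :
    ∃ ξ : ℝ → ℝ, Tendsto ξ atTop atTop ∧ Tendsto (deriv g ∘ ξ) atTop (𝓝 0) := by
  obtain ⟨N, hN⟩ := eventually_atTop.mp hdiff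
  have hmvt : ∀ x ∈ Ici N, ∃ ξ ∈ Ioo x (x + 1), deriv g ξ = g (x + 1) - g x := by
    intro x hx
    have hd : ∀ y ∈ Icc x (x + 1), DifferentiableAt ℝ g y := fun y hy => hN y (hx.out.trans hy.1)
    obtain ⟨ξ, hξ, hslope⟩ := exists_deriv_eq_slope g (lt_add_one x)
      (fun y hy => (hd y hy).continuousAt.continuousWithinAt)
      (fun y hy => (hd y (Ioo_subset_Icc_self hy)).differentiableWithinAt)
    exact ⟨ξ, hξ, by rw [hslope, add_sub_cancel_left, div_one]⟩
  choose! ξ hξ hξeq using hmvt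
  refine ⟨ξ, tendsto_atTop_mono' _ ?_ tendsto_id, ?_⟩
  · filter_upwards [eventually_ge_atTop N] with x hx using (hξ x hx).1.le
  · have hstep : Tendsto (fun x => g (x + 1) - g x) atTop (𝓝 (l - l)) :=
      (hg.comp (tendsto_atTop_add_const_right _ 1 tendsto_id)).sub hg
    rw [sub_self] at hstep
    refine hstep.congr' ?_
    filter_upwards [eventually_ge_atTop N] with x hx using (hξeq x hx).symm

theorem deriv_exp_const_mul_sq {f : ℝ → ℝ} {x : ℝ} (γ : ℝ) (hf : DifferentiableAt ℝ f x) :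
    deriv (fun y => Real.exp (γ * f y)) x ^ 2 =
      γ ^ 2 * (deriv f x ^ 2 * Real.exp (2 * γ * f x)) := by
  rw [((hf.hasDerivAt.const_mul γ).exp).deriv, show 2 * γ * f x = γ * f x + γ * f x by ring,
    Real.exp_add]
  ring

theorem big_crunch_time_is_finite_general (b : EReal)
    (f : ℝ → ℝ) (γtil m : ℝ) (hγtil : 0 < γtil) (hm : 0 < m)
    (h1 : Filter.Tendsto f
      (Filter.comap (fun τ : ℝ => (τ : EReal)) (nhdsWithin b (Set.Iio b))) Filter.atBot)
    (h2 : Filter.Tendsto (fun τ : ℝ => (deriv f τ) ^ 2 * Real.exp (2 * γtil * f τ))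
      (Filter.comap (fun τ : ℝ => (τ : EReal)) (nhdsWithin b (Set.Iio b))) (nhds m)) :
    b ≠ ⊤ := by
  rintro rfl
  rw [EReal.comap_coe_nhdsLT_top] at h1 h2
  set g : ℝ → ℝ := fun τ => Real.exp (γtil * f τ)
  -- `deriv f τ ≠ 0` eventually, and `deriv` vanishes wherever `f` is not differentiable.
  have hf_diff : ∀ᶠ τ in atTop, DifferentiableAt ℝ f τ := by
    filter_upwards [h2.eventually (lt_mem_nhds hm)] with τ hτ
    refine differentiableAt_of_deriv_ne_zero fun h => ?_
    simp [h] at hτ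
  have hg : Tendsto g atTop (𝓝 0) :=
    Real.tendsto_exp_atBot.comp (h1.const_mul_atBot hγtil)
  have hg' : Tendsto (fun τ => deriv g τ ^ 2) atTop (𝓝 (γtil ^ 2 * m)) := by
    refine (h2.const_mul _).congr' ?_
    filter_upwards [hf_diff] with τ hτ using (deriv_exp_const_mul_sq γtil hτ).symm
  obtain ⟨ξ, hξ, hξ0⟩ := exists_tendsto_deriv_comp_zero_of_tendsto_atTop
    (hf_diff.mono fun τ hτ => (hτ.const_mul γtil).exp) hg
  have hlim : γtil ^ 2 * m = 0 :=
    tendsto_nhds_unique (hg'.comp hξ) (by simpa [Function.comp_def] using hξ0.pow 2)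
  exact (by positivity : 0 < γtil ^ 2 * m).ne' hlim

/-- If `f ∈ C²([a,b))` with `f(τ) → -∞` and `|f'(τ)|² e^{2γtil f(τ)} → m > 0` as `τ → b`
(where `b ≤ ∞`), then `b` is finite. -/
theorem big_crunch_time_is_finite (a : ℝ) (b : EReal) (hab : (a : EReal) < b)
    (f : ℝ → ℝ) (γtil m : ℝ) (hγtil : 0 < γtil) (hm : 0 < m)
    (hf : ContDiffOn ℝ 2 f {τ : ℝ | a ≤ τ ∧ (τ : EReal) < b})
    (h1 : Filter.Tendsto f
      (Filter.comap (fun τ : ℝ => (τ : EReal)) (nhdsWithin b (Set.Iio b))) Filter.atBot)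
    (h2 : Filter.Tendsto (fun τ : ℝ => (deriv f τ) ^ 2 * Real.exp (2 * γtil * f τ))
      (Filter.comap (fun τ : ℝ => (τ : EReal)) (nhdsWithin b (Set.Iio b))) (nhds m)) :
    b ≠ ⊤ :=
  big_crunch_time_is_finite_general b f γtil m hγtil hm h1 h2
end

section
/- Let f ∈ C²([a,0)) satisfy f' < 0, lim_{τ→0⁻} f(τ) = −∞ and lim_{τ→0⁻} |f'(τ)|² e^{2γ̃ f(τ)} = m with γ̃, m > 0. Then lim_{τ→0⁻} e^{γ̃ f(τ)}/τ = −γ̃ √m. -/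
/-! Since `f' < 0`, the hypothesis on `|f'|² e^{2γ̃f}` says `f' e^{γ̃f} → -√m`, and
`γ̃ f' e^{γ̃f}` is the derivative of `e^{γ̃f}`, which tends to `0`; L'Hôpital's rule applied to
`e^{γ̃f(τ)} / τ` gives the limit. -/

open Filter Topology Set

theorem tendsto_div_nhdsLT_zero_of_tendsto_deriv {a L : ℝ} {F : ℝ → ℝ} (ha : a < 0)
    (hF : ∀ x ∈ Ioo a 0, DifferentiableAt ℝ F x) (hF0 : Tendsto F (𝓝[<] 0) (𝓝 0))
    (hF' : Tendsto (deriv F) (𝓝[<] 0) (𝓝 L)) :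
    Tendsto (fun τ => F τ / τ) (𝓝[<] 0) (𝓝 L) := by
  have hmem : Ioo a 0 ∈ 𝓝[<] (0 : ℝ) := Ioo_mem_nhdsLT ha
  refine deriv.lhopital_zero_nhdsLT (eventually_of_mem hmem hF) ?_ hF0
    (tendsto_id.mono_left nhdsWithin_le_nhds) ?_
  · simp
  · simpa only [deriv_id'', div_one] using hF'

theorem tendsto_neg_sqrt_of_tendsto_sq {α : Type*} {l : Filter α} {u : α → ℝ} {m : ℝ}
    (hneg : ∀ᶠ x in l, u x < 0) (hsq : Tendsto (fun x => u x ^ 2) l (𝓝 m)) :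
    Tendsto u l (𝓝 (-√m)) := by
  refine (Real.continuous_sqrt.continuousAt.tendsto.comp hsq).neg.congr' ?_
  filter_upwards [hneg] with x hx
  simp [Real.sqrt_sq_eq_abs, abs_of_neg hx]

theorem sq_mul_exp_mul (d c y : ℝ) :
    (d * Real.exp (c * y)) ^ 2 = d ^ 2 * Real.exp (2 * c * y) := by
  rw [mul_pow, ← Real.exp_nat_mul]
  ring_nf

theorem lim_exp_gamma_f_div_tau_general (a : ℝ) (ha : a < 0) (f : ℝ → ℝ) (γtil m : ℝ)
    (hγtil : 0 < γtil)
    (hf : ContDiffOn ℝ 2 f (Set.Ico a 0))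
    (hf' : ∀ τ ∈ Set.Ico a (0:ℝ), deriv f τ < 0)
    (h1 : Filter.Tendsto f (nhdsWithin 0 (Set.Iio 0)) Filter.atBot)
    (h2 : Filter.Tendsto (fun τ : ℝ => (deriv f τ) ^ 2 * Real.exp (2 * γtil * f τ))
      (nhdsWithin 0 (Set.Iio 0)) (nhds m)) :
    Filter.Tendsto (fun τ : ℝ => Real.exp (γtil * f τ) / τ)
      (nhdsWithin 0 (Set.Iio 0)) (nhds (-γtil * Real.sqrt m)) := by
  have hmem : Ioo a 0 ∈ 𝓝[<] (0 : ℝ) := Ioo_mem_nhdsLT ha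
  have hdiff : ∀ x ∈ Ioo a 0, DifferentiableAt ℝ f x := fun x hx =>
    (hf.differentiableOn (by norm_num)).differentiableAt
      (mem_of_superset (isOpen_Ioo.mem_nhds hx) Ioo_subset_Ico_self)
  have hkey : Tendsto (fun τ => deriv f τ * Real.exp (γtil * f τ)) (𝓝[<] 0) (𝓝 (-√m)) := by
    refine tendsto_neg_sqrt_of_tendsto_sq ?_ (by simpa only [sq_mul_exp_mul] using h2)
    filter_upwards [hmem] with x hx
    exact mul_neg_of_neg_of_pos (hf' x (Ioo_subset_Ico_self hx)) (Real.exp_pos _)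
  refine tendsto_div_nhdsLT_zero_of_tendsto_deriv ha
    (fun x hx => ((hdiff x hx).const_mul γtil).exp)
    (Real.tendsto_exp_atBot.comp (h1.const_mul_atBot hγtil)) ?_
  rw [neg_mul, ← mul_neg]
  refine (hkey.const_mul γtil).congr' ?_
  filter_upwards [hmem] with x hx
  rw [(((hdiff x hx).hasDerivAt.const_mul γtil).exp).deriv]
  ring

/-- If `f ∈ C²([a,0))` with `f' < 0`, `f(τ) → -∞` and `|f'|² e^{2γtil f} → m > 0` as `τ → 0⁻`,
then `e^{γtil f(τ)}/τ → -γtil √m` as `τ → 0⁻`. -/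
theorem lim_exp_gamma_f_div_tau (a : ℝ) (ha : a < 0) (f : ℝ → ℝ) (γtil m : ℝ)
    (hγtil : 0 < γtil) (hm : 0 < m)
    (hf : ContDiffOn ℝ 2 f (Set.Ico a 0))
    (hf' : ∀ τ ∈ Set.Ico a (0:ℝ), deriv f τ < 0)
    (h1 : Filter.Tendsto f (nhdsWithin 0 (Set.Iio 0)) Filter.atBot)
    (h2 : Filter.Tendsto (fun τ : ℝ => (deriv f τ) ^ 2 * Real.exp (2 * γtil * f τ))
      (nhdsWithin 0 (Set.Iio 0)) (nhds m)) :
    Filter.Tendsto (fun τ : ℝ => Real.exp (γtil * f τ) / τ)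
      (nhdsWithin 0 (Set.Iio 0)) (nhds (-γtil * Real.sqrt m)) :=
  lim_exp_gamma_f_div_tau_general a ha f γtil m hγtil hf hf' h1 h2
end

section
/- Let φ : [0,∞) → (−∞,0) be locally Lipschitz and suppose φ'(t)/φ(t) ≥ −γ + c̃ φ(t) for a.e. t ≥ t₀ with c̃ > 0, and −φ(t) ≤ c_λ e^{−λt} for some 0 < λ < γ. Let w(t) = log(−φ(t)) + γ t. Then w is bounded below on [0,∞), i.e., there exists c₂ > 0 with φ(t) e^{γt} ≤ −c₂ for all t. -/
open Set Metric MeasureTheory Filter Topology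


lemma locallyLipschitz_lipschitzOnWith {f : ℝ → ℝ} (hf : LocallyLipschitz f) (c d : ℝ) :
    ∃ K : NNReal, LipschitzOnWith K f (Set.Icc c d) := by
  rcases le_or_gt c d with hcd | hcd
  swap
  · exact ⟨1, by rw [Set.Icc_eq_empty_of_lt hcd]; exact lipschitzOnWith_empty 1 f⟩
  have hfc : Continuous f := LocallyLipschitz.continuous hf
  -- choose local data
  choose K t ht hK using hf
  choose ε hε hball using fun x => Metric.mem_nhds_iff.1 (ht x)
  -- lipschitz on balls
  have hLb : ∀ x, LipschitzOnWith (K x) f (ball x (ε x)) := fun x => (hK x).mono (hball x)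
  -- finite subcover by half balls
  obtain ⟨T, hTmem, hTcov⟩ := (isCompact_Icc (a := c) (b := d)).elim_nhds_subcover
    (fun x => ball x (ε x / 2)) (fun x _ => ball_mem_nhds x (by have := hε x; linarith))
  -- bound of f on Icc
  obtain ⟨M, hM⟩ := (isCompact_Icc (a := c) (b := d)).exists_bound_of_continuousOn
    hfc.continuousOn
  have hM0 : 0 ≤ M := le_trans (norm_nonneg _) (hM c ⟨le_refl c, hcd⟩)
  -- T is nonempty
  have hTne : T.Nonempty := by
    by_contra h
    rw [Finset.not_nonempty_iff_eq_empty] at h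
    have := hTcov (show c ∈ Icc c d from ⟨le_refl c, hcd⟩)
    simp [h] at this
  set δ : ℝ := T.inf' hTne (fun x => ε x / 2) with hδdef
  have hδ0 : 0 < δ := by
    rw [hδdef, Finset.lt_inf'_iff]
    intro x _
    have := hε x; linarith
  set Km : NNReal := T.sup K with hKm
  set C : ℝ := max (Km : ℝ) (2 * M / δ) with hC
  have hC0 : 0 ≤ C := le_trans (Km.coe_nonneg) (le_max_left _ _)
  refine ⟨C.toNNReal, LipschitzOnWith.of_dist_le' ?_⟩
  intro x hx y hy
  rcases le_or_gt (dist x y) δ with hd | hd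
  · obtain ⟨z, hzT, hxz⟩ := Set.mem_iUnion₂.1 (hTcov hx)
    have hδz : δ ≤ ε z / 2 := Finset.inf'_le _ hzT
    have hxz' : x ∈ ball z (ε z) := by
      rw [mem_ball] at hxz ⊢
      have := hε z; linarith
    have hyz : y ∈ ball z (ε z) := by
      rw [mem_ball]
      have h1 : dist y z ≤ dist y x + dist x z := dist_triangle _ _ _
      rw [dist_comm y x] at h1
      rw [mem_ball] at hxz
      linarith
    calc dist (f x) (f y) ≤ (K z : ℝ) * dist x y := (hLb z).dist_le_mul x hxz' y hyz
      _ ≤ C * dist x y := by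
          apply mul_le_mul_of_nonneg_right _ dist_nonneg
          exact le_trans (NNReal.coe_le_coe.2 (Finset.le_sup hzT)) (le_max_left _ _)
  · have h2 : dist (f x) (f y) ≤ 2 * M := by
      calc dist (f x) (f y) ≤ ‖f x‖ + ‖f y‖ := dist_le_norm_add_norm _ _
        _ ≤ 2 * M := by have := hM x hx; have := hM y hy; linarith
    calc dist (f x) (f y) ≤ 2 * M := h2
      _ = (2 * M / δ) * δ := by field_simp
      _ ≤ (2 * M / δ) * dist x y := by
          apply mul_le_mul_of_nonneg_left (le_of_lt hd) (by positivity)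
      _ ≤ C * dist x y := mul_le_mul_of_nonneg_right (le_max_right _ _) dist_nonneg


lemma tendsto_slope_seq {f : ℝ → ℝ} {c L : ℝ} (hd : HasDerivAt f L c) :
    Tendsto (fun n : ℕ => (f (c + 1/(n+1:ℝ)) - f c) / (1/(n+1:ℝ))) atTop (𝓝 L) := by
  have hs := hasDerivAt_iff_tendsto_slope.1 hd
  have hu : Tendsto (fun n : ℕ => c + 1/(n+1:ℝ)) atTop (𝓝[≠] c) := by
    apply tendsto_nhdsWithin_of_tendsto_nhds_of_eventually_within
    · have := tendsto_one_div_add_atTop_nhds_zero_nat (𝕜 := ℝ)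
      have h2 : Tendsto (fun n : ℕ => c + 1/(n+1:ℝ)) atTop (𝓝 (c + 0)) :=
        tendsto_const_nhds.add this
      simpa using h2
    · filter_upwards with n
      have : (0:ℝ) < 1/(n+1:ℝ) := by positivity
      simp only [mem_compl_iff, mem_singleton_iff]
      intro h
      nlinarith [this, congrArg (fun x => x - c) h]
  have := hs.comp hu
  convert this using 2 with n
  simp only [Function.comp_apply, slope_def_field]
  rw [div_eq_div_iff (by positivity) (by ring_nf; positivity)]
  ring

lemma lipschitz_integral_deriv {f : ℝ → ℝ} {K : NNReal} (hf : LipschitzWith K f)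
    {a b : ℝ} (hab : a ≤ b) : ∫ t in Set.Ioc a b, deriv f t = f b - f a := by
  have hcont : Continuous f := hf.continuous
  set u : ℕ → ℝ := fun n => 1/(n+1:ℝ) with hu
  have hu0 : ∀ n, 0 < u n := fun n => by rw [hu]; positivity
  set g : ℕ → ℝ → ℝ := fun n t => (f (t + u n) - f t) / u n with hg
  have hbound : ∀ n t, |g n t| ≤ (K:ℝ) := by
    intro n t
    have h1 : |f (t + u n) - f t| ≤ (K:ℝ) * |t + u n - t| := by
      have := hf.dist_le_mul (t + u n) t
      rwa [Real.dist_eq, Real.dist_eq] at this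
    rw [hg, abs_div, abs_of_pos (hu0 n), div_le_iff₀ (hu0 n)]
    simpa [abs_of_pos (hu0 n)] using h1
  have hae : ∀ᵐ t ∂(volume.restrict (Set.Ioc a b)),
      Filter.Tendsto (fun n => g n t) Filter.atTop (𝓝 (deriv f t)) := by
    apply ae_restrict_of_ae
    filter_upwards [hf.ae_differentiableAt_of_real] with t ht
    exact tendsto_slope_seq ht.hasDerivAt
  have hDCT : Filter.Tendsto (fun n => ∫ t in Set.Ioc a b, g n t) Filter.atTop
      (𝓝 (∫ t in Set.Ioc a b, deriv f t)) := by
    apply MeasureTheory.tendsto_integral_of_dominated_convergence (fun _ => (K:ℝ))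
    · intro n
      exact (((hcont.comp (continuous_id.add continuous_const)).sub hcont).div_const
        _).aestronglyMeasurable
    · exact integrableOn_const (C := (K:ℝ)) measure_Ioc_lt_top.ne
    · intro n
      filter_upwards with t using by rw [Real.norm_eq_abs]; exact hbound n t
    · exact hae
  have hInt : ∀ c d : ℝ, IntervalIntegrable f volume c d := fun c d =>
    hcont.intervalIntegrable c d
  have hval : ∀ n, ∫ t in Set.Ioc a b, g n t =
      ((∫ t in b..(b + u n), f t) - ∫ t in a..(a + u n), f t) / u n := by
    intro n
    have hi1 : IntervalIntegrable (fun t => f (t + u n)) volume a b :=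
      Continuous.intervalIntegrable (hcont.comp (by continuity)) a b
    rw [← intervalIntegral.integral_of_le hab]
    have h1 : ∫ t in a..b, g n t
        = ((∫ t in a..b, f (t + u n)) - ∫ t in a..b, f t) / u n := by
      rw [hg]
      rw [show (fun (t:ℝ) => (f (t + u n) - f t) / u n)
          = fun t => (f (t + u n) - f t) * (u n)⁻¹ by funext t; rw [div_eq_mul_inv]]
      rw [intervalIntegral.integral_mul_const, intervalIntegral.integral_sub hi1 (hInt a b),
        div_eq_mul_inv]
    have hcr : (∫ t in a..b, f (t + u n)) = ∫ t in (a + u n)..(b + u n), f t := by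
      simpa using intervalIntegral.integral_comp_add_right (a := a) (b := b) (fun t => f t) (u n)
    rw [h1, hcr]
    have h2 : (∫ t in a..(a + u n), f t) + (∫ t in (a + u n)..(b + u n), f t)
        = ∫ t in a..(b + u n), f t :=
      intervalIntegral.integral_add_adjacent_intervals (hInt _ _) (hInt _ _)
    have h3 : (∫ t in a..b, f t) + (∫ t in b..(b + u n), f t)
        = ∫ t in a..(b + u n), f t :=
      intervalIntegral.integral_add_adjacent_intervals (hInt _ _) (hInt _ _)
    congr 1
    linarith
  have hend : ∀ c : ℝ, Filter.Tendsto (fun n => (∫ t in c..(c + u n), f t) / u n)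
      Filter.atTop (𝓝 (f c)) := by
    intro c
    have hD : HasDerivAt (fun x => ∫ t in c..x, f t) (f c) c :=
      intervalIntegral.integral_hasDerivAt_right (hInt c c)
        (hcont.stronglyMeasurableAtFilter _ _) hcont.continuousAt
    have h := tendsto_slope_seq hD
    convert h using 2 with n
    rw [hu]
    simp
  have hlim2 : Filter.Tendsto (fun n => ∫ t in Set.Ioc a b, g n t) Filter.atTop
      (𝓝 (f b - f a)) := by
    simp only [hval]
    have h := (hend b).sub (hend a)
    convert h using 2 with n
    rw [sub_div]
  exact tendsto_nhds_unique hDCT hlim2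

lemma abs_deriv_le_of_lipschitz {g : ℝ → ℝ} {K : NNReal} (hg : LipschitzWith K g) (t : ℝ) :
    |deriv g t| ≤ (K : ℝ) := by
  rcases em (DifferentiableAt ℝ g t) with h | h
  · have hs := hasDerivAt_iff_tendsto_slope.1 h.hasDerivAt
    have habs : Filter.Tendsto (fun y => |slope g t y|) (𝓝[≠] t) (𝓝 |deriv g t|) := hs.abs
    apply le_of_tendsto habs
    filter_upwards [self_mem_nhdsWithin] with y hy
    have hyt : y ≠ t := hy
    have h1 : |g y - g t| ≤ (K:ℝ) * |y - t| := by
      have := hg.dist_le_mul y t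
      rwa [Real.dist_eq, Real.dist_eq] at this
    rw [slope_def_field, abs_div, div_le_iff₀ (by simpa [sub_eq_zero] using hyt : (0:ℝ) < |y - t|)]
    exact h1
  · rw [deriv_zero_of_not_differentiableAt h]
    simp

lemma lipschitzOnWith_integral_deriv_ineq {w ψ : ℝ → ℝ} {a b : ℝ} (hab : a ≤ b)
    {K : NNReal} (hw : LipschitzOnWith K w (Set.Icc a b))
    (hψ : IntegrableOn ψ (Set.Ioc a b))
    (hle : ∀ᵐ t ∂(volume.restrict (Set.Ioc a b)), ψ t ≤ deriv w t) :
    w a + ∫ t in Set.Ioc a b, ψ t ≤ w b := by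
  obtain ⟨g, hg, hgeq⟩ := hw.extend_real
  have hderiv_eq : ∀ t ∈ Set.Ioo a b, deriv g t = deriv w t := by
    intro t ht
    apply Filter.EventuallyEq.deriv_eq
    filter_upwards [Icc_mem_nhds ht.1 ht.2] with s hs
    exact (hgeq hs).symm
  have hae_eq : ∀ᵐ t ∂(volume.restrict (Set.Ioc a b)), deriv g t = deriv w t := by
    rw [← MeasureTheory.Measure.restrict_congr_set MeasureTheory.Ioo_ae_eq_Ioc]
    filter_upwards [ae_restrict_mem measurableSet_Ioo] with t ht using hderiv_eq t ht
  have hint : IntegrableOn (deriv g) (Set.Ioc a b) := by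
    apply MeasureTheory.Integrable.mono' (g := fun _ => (K:ℝ))
      (integrableOn_const (C := (K:ℝ)) measure_Ioc_lt_top.ne)
      (measurable_deriv g).aestronglyMeasurable
    filter_upwards with t using by rw [Real.norm_eq_abs]; exact abs_deriv_le_of_lipschitz hg t
  have h1 : ∫ t in Set.Ioc a b, ψ t ≤ ∫ t in Set.Ioc a b, deriv g t := by
    apply MeasureTheory.integral_mono_ae hψ hint
    filter_upwards [hle, hae_eq] with t h1 h2
    rw [h2]; exact h1
  have h2 : ∫ t in Set.Ioc a b, deriv g t = g b - g a := lipschitz_integral_deriv hg hab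
  have hga : g a = w a := (hgeq ⟨le_refl a, hab⟩).symm
  have hgb : g b = w b := (hgeq ⟨hab, le_refl b⟩).symm
  rw [h2, hga, hgb] at h1
  linarith

lemma abs_log_sub_log_le {m x y : ℝ} (hm : 0 < m) (hx : m ≤ x) (hy : m ≤ y) :
    |Real.log x - Real.log y| ≤ (1/m) * |x - y| := by
  wlog h : y ≤ x generalizing x y
  · have h2 := this hy hx (le_of_not_ge h)
    rw [abs_sub_comm (Real.log x) (Real.log y), abs_sub_comm x y]
    exact h2
  have hx0 : 0 < x := lt_of_lt_of_le hm hx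
  have hy0 : 0 < y := lt_of_lt_of_le hm hy
  have hlog : Real.log y ≤ Real.log x := Real.log_le_log hy0 h
  rw [abs_of_nonneg (sub_nonneg.2 hlog), abs_of_nonneg (sub_nonneg.2 h)]
  have h1 : Real.log x - Real.log y = Real.log (x / y) := (Real.log_div hx0.ne' hy0.ne').symm
  have h2 : Real.log (x/y) ≤ x/y - 1 := Real.log_le_sub_one_of_pos (by positivity)
  have h3 : x/y - 1 = (x - y)/y := by field_simp
  have h4 : (x-y)/y ≤ (x-y)/m := by gcongr
  have h5 : (x-y)/m = (1/m) * (x - y) := by field_simp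
  linarith

/-- Optimal lower exponential rate: if `φ < 0` is locally Lipschitz,
`(log(−φ))' + γ ≥ c̃ φ` a.e. from some time on, and `−φ(t) ≤ c_λ e^{−λt}` with
`0 < λ < γ`, then there is `c₂ > 0` with `φ(t) e^{γt} ≤ −c₂` for all `t ≥ 0`. -/
theorem optimal_lower_exponential_rate (φ : ℝ → ℝ) (γ ctil t₀ lam clam : ℝ)
    (hγ : 0 < γ) (hctil : 0 < ctil) (ht₀ : 0 ≤ t₀)
    (hlam : 0 < lam) (hlamγ : lam < γ) (hclam : 0 < clam)
    (hlip : LocallyLipschitz φ)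
    (hneg : ∀ t ≥ (0:ℝ), φ t < 0)
    (hode : ∀ᵐ t ∂(MeasureTheory.volume.restrict (Set.Ioi t₀)),
      -γ + ctil * φ t ≤ deriv φ t / φ t)
    (hdecay : ∀ t ≥ (0:ℝ), -φ t ≤ clam * Real.exp (-lam * t)) :
    ∃ c₂ > (0:ℝ), ∀ t ≥ (0:ℝ), φ t * Real.exp (γ * t) ≤ -c₂ := by
  have hφc : Continuous φ := LocallyLipschitz.continuous hlip
  set w : ℝ → ℝ := fun t => Real.log (-φ t) + γ * t with hw
  set C : ℝ := ctil * clam with hC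
  have hC0 : 0 < C := mul_pos hctil hclam
  -- Step A : for all b ≥ t₀, w t₀ - C/lam ≤ w b
  have stepA : ∀ b ≥ t₀, w t₀ - C/lam ≤ w b := by
    intro b hb
    -- Lipschitz data for φ on Icc t₀ b
    obtain ⟨K1, hK1⟩ := locallyLipschitz_lipschitzOnWith hlip t₀ b
    -- positive min of -φ on Icc t₀ b
    obtain ⟨x₀, hx₀mem, hx₀min⟩ := isCompact_Icc.exists_isMinOn (nonempty_Icc.2 hb)
      (hφc.neg.continuousOn)
    set m : ℝ := -φ x₀ with hm
    have hm0 : 0 < m := by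
      have := hneg x₀ (le_trans ht₀ hx₀mem.1)
      simp only [hm]; linarith
    have hmle : ∀ x ∈ Icc t₀ b, m ≤ -φ x := fun x hx => hx₀min hx
    -- w is Lipschitz on Icc t₀ b
    have hwLip : LipschitzOnWith (Real.toNNReal ((K1:ℝ)/m + γ)) w (Icc t₀ b) := by
      apply LipschitzOnWith.of_dist_le'
      intro x hx y hy
      have hphi : |(-φ x) - (-φ y)| ≤ (K1:ℝ) * |x - y| := by
        have := hK1.dist_le_mul x hx y hy
        rw [Real.dist_eq, Real.dist_eq] at this
        calc |(-φ x) - (-φ y)| = |φ x - φ y| := by rw [← abs_neg]; ring_nf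
          _ ≤ (K1:ℝ) * |x - y| := this
      have hlg : |Real.log (-φ x) - Real.log (-φ y)| ≤ (1/m) * |(-φ x) - (-φ y)| :=
        abs_log_sub_log_le hm0 (hmle x hx) (hmle y hy)
      have : dist (w x) (w y) ≤ |Real.log (-φ x) - Real.log (-φ y)| + γ * |x - y| := by
        rw [Real.dist_eq, hw]
        have h1 : Real.log (-φ x) + γ * x - (Real.log (-φ y) + γ * y)
            = (Real.log (-φ x) - Real.log (-φ y)) + γ * (x - y) := by ring
        rw [h1]
        calc |(Real.log (-φ x) - Real.log (-φ y)) + γ * (x - y)|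
            ≤ |Real.log (-φ x) - Real.log (-φ y)| + |γ * (x - y)| := abs_add_le _ _
          _ = |Real.log (-φ x) - Real.log (-φ y)| + γ * |x - y| := by
              rw [abs_mul, abs_of_pos hγ]
      rw [Real.dist_eq]
      calc dist (w x) (w y) ≤ |Real.log (-φ x) - Real.log (-φ y)| + γ * |x - y| := this
        _ ≤ (1/m) * ((K1:ℝ) * |x - y|) + γ * |x - y| := by
            have h9 : (1/m) * |-φ x - -φ y| ≤ (1/m) * ((K1:ℝ) * |x - y|) :=
              mul_le_mul_of_nonneg_left hphi (by positivity)
            linarith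
        _ = ((K1:ℝ)/m + γ) * |x - y| := by ring
    -- a.e. differentiability of φ on Ioc t₀ b
    obtain ⟨K2, hK2⟩ := locallyLipschitz_lipschitzOnWith hlip (t₀ - 1) (b + 1)
    obtain ⟨g2, hg2, hgeq2⟩ := hK2.extend_real
    have hdiff : ∀ᵐ t ∂(volume.restrict (Set.Ioc t₀ b)), DifferentiableAt ℝ φ t := by
      filter_upwards [ae_restrict_of_ae hg2.ae_differentiableAt_of_real,
        ae_restrict_mem measurableSet_Ioc] with t h1 h2
      have hmem : Icc (t₀ - 1) (b + 1) ∈ 𝓝 t :=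
        Icc_mem_nhds (by linarith [h2.1]) (by linarith [h2.2])
      have heq : φ =ᶠ[𝓝 t] g2 := by filter_upwards [hmem] with s hs using hgeq2 hs
      exact heq.differentiableAt_iff.2 h1
    -- the a.e. derivative inequality for w
    set ψ : ℝ → ℝ := fun t => -(C * Real.exp (-lam * t)) with hψdef
    have hψcont : Continuous ψ := by fun_prop
    have hψint : IntegrableOn ψ (Set.Ioc t₀ b) := hψcont.integrableOn_Ioc
    have hle : ∀ᵐ t ∂(volume.restrict (Set.Ioc t₀ b)), ψ t ≤ deriv w t := by
      filter_upwards [hdiff, ae_restrict_of_ae_restrict_of_subset Ioc_subset_Ioi_self hode,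
        ae_restrict_mem measurableSet_Ioc] with t hdt hot hmt
      have ht0 : (0:ℝ) ≤ t := le_trans ht₀ (le_of_lt hmt.1)
      have hφt : φ t < 0 := hneg t ht0
      have hd1 : HasDerivAt (fun s => -φ s) (-deriv φ t) t := hdt.hasDerivAt.neg
      have hd2 : HasDerivAt (fun s => Real.log (-φ s)) (-deriv φ t / -φ t) t :=
        hd1.log (by linarith)
      have hd3 : HasDerivAt (fun s : ℝ => γ * s) γ t := by
        simpa using (hasDerivAt_id t).const_mul γ
      have hd4 : HasDerivAt w (-deriv φ t / -φ t + γ) t := hd2.add hd3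
      have hdw : deriv w t = deriv φ t / φ t + γ := by
        rw [hd4.deriv, neg_div_neg_eq]
      have h5 : ctil * φ t ≤ deriv w t := by rw [hdw]; linarith
      have h6 : -(clam * Real.exp (-lam * t)) ≤ φ t := by
        have := hdecay t ht0; linarith
      have h7 : ψ t ≤ ctil * φ t := by
        rw [hψdef]
        calc -(C * Real.exp (-lam * t)) = ctil * (-(clam * Real.exp (-lam * t))) := by
              rw [hC]; ring
          _ ≤ ctil * φ t := mul_le_mul_of_nonneg_left h6 hctil.le
      linarith
    -- integral of ψ is at least -C/lam
    have hψval : -(C/lam) ≤ ∫ t in Set.Ioc t₀ b, ψ t := by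
      have hexp : ∫ t in t₀..b, Real.exp (-lam * t)
          = (Real.exp (-lam * t₀) - Real.exp (-lam * b)) / lam := by
        have hF : ∀ t : ℝ, HasDerivAt (fun s => -(1/lam) * Real.exp (-lam * s))
            (Real.exp (-lam * t)) t := by
          intro t
          have h1 : HasDerivAt (fun s : ℝ => -lam * s) (-lam) t := by
            simpa using (hasDerivAt_id t).const_mul (-lam)
          have h2 := h1.exp.const_mul (-(1/lam))
          convert h2 using 1
          all_goals first | rfl | field_simp
        rw [intervalIntegral.integral_eq_sub_of_hasDerivAt (fun t _ => hF t)
          (Continuous.intervalIntegrable (by fun_prop) _ _)]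
        field_simp
        ring
      have hIψ : ∫ t in Set.Ioc t₀ b, ψ t
          = -(C * ((Real.exp (-lam * t₀) - Real.exp (-lam * b)) / lam)) := by
        rw [← intervalIntegral.integral_of_le hb, hψdef]
        rw [intervalIntegral.integral_neg, intervalIntegral.integral_const_mul, hexp]
      rw [hIψ]
      have he1 : Real.exp (-lam * t₀) ≤ 1 := by
        apply Real.exp_le_one_iff.2
        nlinarith
      have he2 : 0 < Real.exp (-lam * b) := Real.exp_pos _
      have h10 : (Real.exp (-lam * t₀) - Real.exp (-lam * b)) / lam ≤ 1/lam :=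
        (div_le_div_iff_of_pos_right hlam).2 (by linarith)
      have h11 : C * ((Real.exp (-lam * t₀) - Real.exp (-lam * b)) / lam) ≤ C * (1/lam) :=
        mul_le_mul_of_nonneg_left h10 hC0.le
      have h12 : C * (1/lam) = C/lam := by ring
      linarith
    have h13 := lipschitzOnWith_integral_deriv_ineq hb hwLip hψint hle
    have h14 : w t₀ - C/lam ≤ w t₀ + ∫ t in Set.Ioc t₀ b, ψ t := by linarith
    exact le_trans h14 h13
  -- Step B : for t ≥ t₀, -φ t * exp (γ t) ≥ exp (w t₀ - C/lam)
  set c₂a : ℝ := Real.exp (w t₀ - C/lam) with hc₂a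
  have hc₂a0 : 0 < c₂a := Real.exp_pos _
  have stepB : ∀ t ≥ t₀, c₂a ≤ -φ t * Real.exp (γ * t) := by
    intro t ht
    have ht0 : (0:ℝ) ≤ t := le_trans ht₀ ht
    have hφt : φ t < 0 := hneg t ht0
    have : Real.exp (w t) = -φ t * Real.exp (γ * t) := by
      rw [hw]
      rw [Real.exp_add, Real.exp_log (by linarith)]
    rw [← this, hc₂a]
    exact Real.exp_le_exp.2 (by linarith [stepA t ht])
  -- Step C : min on [0, t₀]
  obtain ⟨x₁, hx₁mem, hx₁min⟩ := isCompact_Icc.exists_isMinOn (nonempty_Icc.2 ht₀)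
    ((hφc.neg.mul (Real.continuous_exp.comp (continuous_const.mul continuous_id))).continuousOn)
  set m₂ : ℝ := -φ x₁ * Real.exp (γ * x₁) with hm₂
  have hm₂0 : 0 < m₂ := by
    have := hneg x₁ hx₁mem.1
    have := Real.exp_pos (γ * x₁)
    rw [hm₂]; nlinarith
  refine ⟨min c₂a m₂, lt_min hc₂a0 hm₂0, ?_⟩
  intro t ht
  rcases le_or_gt t t₀ with h | h
  · have hmin : m₂ ≤ -φ t * Real.exp (γ * t) := hx₁min ⟨ht, h⟩
    have : min c₂a m₂ ≤ m₂ := min_le_right _ _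
    nlinarith
  · have := stepB t h.le
    have : min c₂a m₂ ≤ c₂a := min_le_left _ _
    nlinarith [stepB t h.le]
end
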